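/- arXiv:2406.18499 — 2 statements merged into one kernel-verified Lean document; each statement's English description precedes it below -/
import Mathlib

section
/- If h : A → B is a morphism of Frobenius algebras, then the map g : B → A defined by g(b) = e¹ ν_B(h(e²) b), where e¹ ⊗ e² = Δ_A(1_A) is the Casimir element of A, is a two-sided inverse of h. -/
open TensorProduct

/-- A Frobenius algebra over `k`: a unital associative `k`-algebra `A` together with a
counital coassociative comultiplication satisfying the Frobenius conditions
`Δ(ab) = a^{(1)} ⊗ a^{(2)}b = ab^{(1)} ⊗ b^{(2)}`. -/
structure FrobeniusAlgebra (k A : Type*) [CommRing k] [Ring A] [Algebra k A] where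
  comul : A →ₗ[k] A ⊗[k] A
  counit : A →ₗ[k] k
  coassoc : ∀ a : A,
    TensorProduct.assoc k A A A
        (TensorProduct.map comul (LinearMap.id : A →ₗ[k] A) (comul a))
      = TensorProduct.map (LinearMap.id : A →ₗ[k] A) comul (comul a)
  counit_left : ∀ a : A,
    TensorProduct.lid k A
        (TensorProduct.map counit (LinearMap.id : A →ₗ[k] A) (comul a)) = a
  counit_right : ∀ a : A,
    TensorProduct.rid k A
        (TensorProduct.map (LinearMap.id : A →ₗ[k] A) counit (comul a)) = a
  frob_left : ∀ a b : A,
    comul (a * b)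
      = TensorProduct.map (LinearMap.mulLeft k a) (LinearMap.id : A →ₗ[k] A) (comul b)
  frob_right : ∀ a b : A,
    comul (a * b)
      = TensorProduct.map (LinearMap.id : A →ₗ[k] A) (LinearMap.mulRight k b) (comul a)

/-- A morphism of Frobenius algebras: a linear map which is simultaneously a morphism of
unital algebras and of counital coalgebras. -/
def IsFrobHom {k A B : Type*} [CommRing k] [Ring A] [Algebra k A] [Ring B] [Algebra k B]
    (FA : FrobeniusAlgebra k A) (FB : FrobeniusAlgebra k B) (h : A →ₗ[k] B) : Prop :=
  (∀ a a' : A, h (a * a') = h a * h a') ∧ h 1 = 1 ∧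
  (∀ a : A, FB.comul (h a) = TensorProduct.map h h (FA.comul a)) ∧
  (∀ a : A, FB.counit (h a) = FA.counit a)


/-- The candidate inverse `g(b) = e¹ ν_B(h(e²) b)` built from the Casimir element
`e¹ ⊗ e² = Δ_A(1)`. -/
noncomputable def frobInverse {k A B : Type*} [CommRing k] [Ring A] [Algebra k A]
    [Ring B] [Algebra k B] (FA : FrobeniusAlgebra k A) (FB : FrobeniusAlgebra k B)
    (h : A →ₗ[k] B) (b : B) : A :=
  TensorProduct.rid k A
    (TensorProduct.map (LinearMap.id : A →ₗ[k] A)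
      (FB.counit ∘ₗ LinearMap.mulRight k b ∘ₗ h) (FA.comul 1))

/-- In any Frobenius algebra, `e¹ ν(e² b) = b`. -/
lemma frob_key {k A : Type*} [CommRing k] [Ring A] [Algebra k A]
    (F : FrobeniusAlgebra k A) (b : A) :
    TensorProduct.rid k A
      (TensorProduct.map (LinearMap.id : A →ₗ[k] A)
        (F.counit ∘ₗ LinearMap.mulRight k b) (F.comul 1)) = b := by
  have h1 : F.comul b
      = TensorProduct.map (LinearMap.id : A →ₗ[k] A) (LinearMap.mulRight k b)
          (F.comul 1) := by
    simpa using F.frob_right 1 b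
  have h2 := F.counit_right b
  rw [h1] at h2
  conv_rhs => rw [← h2]
  congr 1
  have : TensorProduct.map (LinearMap.id : A →ₗ[k] A)
      (F.counit ∘ₗ LinearMap.mulRight k b)
      = TensorProduct.map (LinearMap.id : A →ₗ[k] A) F.counit ∘ₗ
        TensorProduct.map (LinearMap.id : A →ₗ[k] A) (LinearMap.mulRight k b) := by
    rw [← TensorProduct.map_comp, LinearMap.id_comp]
  rw [this]
  rfl

lemma h_rid {k A B : Type*} [CommRing k] [Ring A] [Algebra k A]
    [Ring B] [Algebra k B] (h : A →ₗ[k] B) (x : A ⊗[k] k) :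
    h (TensorProduct.rid k A x)
      = TensorProduct.rid k B
          (TensorProduct.map h (LinearMap.id : k →ₗ[k] k) x) := by
  induction x with
  | zero => simp
  | tmul a c => simp [TensorProduct.rid_tmul]
  | add x y hx hy => simp [map_add, hx, hy]

/-- If `h : A → B` is a morphism of Frobenius algebras, then `g(b) = e¹ ν_B(h(e²) b)` is a
two-sided inverse of `h`. -/
theorem frobInverse_is_inverse {k A B : Type*} [Field k] [Ring A] [Algebra k A]
    [Ring B] [Algebra k B] (FA : FrobeniusAlgebra k A) (FB : FrobeniusAlgebra k B)
    (h : A →ₗ[k] B) (hh : IsFrobHom FA FB h) :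
    (∀ b : B, h (frobInverse FA FB h b) = b) ∧
    (∀ a : A, frobInverse FA FB h (h a) = a) := by
  obtain ⟨hmul, hone, hcomul, hcounit⟩ := hh
  constructor
  · intro b
    unfold frobInverse
    rw [h_rid]
    have step : TensorProduct.map h (LinearMap.id : k →ₗ[k] k)
        (TensorProduct.map (LinearMap.id : A →ₗ[k] A)
          (FB.counit ∘ₗ LinearMap.mulRight k b ∘ₗ h) (FA.comul 1))
        = TensorProduct.map (LinearMap.id : B →ₗ[k] B)
            (FB.counit ∘ₗ LinearMap.mulRight k b) (FB.comul 1) := by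
      have e1 : FB.comul (1 : B) = TensorProduct.map h h (FA.comul 1) := by
        rw [← hone, hcomul]
      rw [e1, ← LinearMap.comp_apply, ← TensorProduct.map_comp]
      conv_rhs => rw [← LinearMap.comp_apply, ← TensorProduct.map_comp]
      congr 1
    rw [step, frob_key]
  · intro a
    unfold frobInverse
    have e2 : FB.counit ∘ₗ LinearMap.mulRight k (h a) ∘ₗ h
        = FA.counit ∘ₗ LinearMap.mulRight k a := by
      ext x
      simp [← hmul, hcounit]
    rw [e2, frob_key]
end

section
/- Let A be a Frobenius algebra over k. Then the dual space A* is a Frobenius algebra with multiplication (f·g)(a) := f(a^{(2)})g(a^{(1)}), unit ν_A, comultiplication determined by Δ(f)(a ⊗ b) := f(ba), and counit ν_{A*}(f) := f(1_A). -/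
/-! The multiplication of `A*` is the convolution product of linear maps from the coalgebra `A`
to `k`, with the factors swapped, so associativity and unitality are those of the convolution
ring, whose unit is the counit of `A`.

The counit and Frobenius laws of `A` force it to be finite dimensional: every `a` is a contraction
of `Δ(1)`, namely `a = ν(a e¹) e²`. Hence `A* ⊗ M ≃ Hom(A, M)`, so an element of `A* ⊗ A*`
(or of `A* ⊗ A* ⊗ A*`) is determined by its values on pairs (triples) of elements of `A`.
Defining `Δ(f)` as the tensor with values `f(ba)`, coassociativity and counitality of `A*`
reduce to associativity and unitality of `A`, and its Frobenius conditions to those of `A`. -/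

open TensorProduct

section DualFrobenius

variable {k A : Type*} [Field k] [Ring A] [Algebra k A]

/-- The multiplication on the dual space `A*`: `(f · g)(a) = f(a^{(2)}) g(a^{(1)})`. -/
noncomputable def dualMul (FA : FrobeniusAlgebra k A) :
    Module.Dual k A →ₗ[k] Module.Dual k A →ₗ[k] Module.Dual k A :=
  ((TensorProduct.mapBilinear (RingHom.id k) A A k k).compr₂
    ((LinearMap.lcomp k k FA.comul).comp
      (LinearMap.llcomp k (A ⊗[k] A) (k ⊗[k] k) k
        (TensorProduct.lid k k).toLinearMap))).flip

/-- Evaluation of an element of `A* ⊗ A*` at a pair `(a, b)`. -/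
noncomputable def dualPair (t : Module.Dual k A ⊗[k] Module.Dual k A) (a b : A) : k :=
  TensorProduct.lid k k
    (TensorProduct.map (Module.Dual.eval k A a) (Module.Dual.eval k A b) t)

/-- The counit of the dual Frobenius algebra: evaluation at `1`. -/
noncomputable def dualCounit : Module.Dual k A →ₗ[k] k := Module.Dual.eval k A 1

section Coalgebra

variable {R C : Type*} [CommRing R] [Ring C] [Algebra R C]

abbrev FrobeniusAlgebra.toCoalgebra (F : FrobeniusAlgebra R C) : Coalgebra R C where
  comul := F.comul
  counit := F.counit
  coassoc := LinearMap.ext F.coassoc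
  rTensor_counit_comp_comul := LinearMap.ext fun a =>
    (TensorProduct.lid R C).injective (by simpa [LinearMap.rTensor_def] using F.counit_left a)
  lTensor_counit_comp_comul := LinearMap.ext fun a =>
    (TensorProduct.rid R C).injective (by simpa [LinearMap.lTensor_def] using F.counit_right a)

theorem FrobeniusAlgebra.lid_map_counit_mulLeft_comul_one (F : FrobeniusAlgebra R C) (a : C) :
    TensorProduct.lid R C (TensorProduct.map (F.counit ∘ₗ LinearMap.mulLeft R a) LinearMap.id
      (F.comul 1)) = a := by
  have h := F.counit_left a
  rwa [← mul_one a, F.frob_left, ← LinearMap.comp_apply (TensorProduct.map _ _),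
    ← TensorProduct.map_comp, LinearMap.id_comp, mul_one] at h

theorem FrobeniusAlgebra.finite (F : FrobeniusAlgebra R C) : Module.Finite R C := by
  obtain ⟨N, hN, hsub⟩ := TensorProduct.exists_finite_submodule_right_of_setFinite
    {F.comul 1} (Set.finite_singleton _)
  obtain ⟨t, ht⟩ := hsub rfl
  have mem (a : C) : a ∈ N := by
    rw [← F.lid_map_counit_mulLeft_comul_one a, ← ht]
    clear ht
    induction t using TensorProduct.induction_on with
    | zero => simp
    | tmul x n => simpa using N.smul_mem _ n.2
    | add x y hx hy => simpa using N.add_mem hx hy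
  exact Module.Finite.of_surjective N.subtype fun a => ⟨⟨a, mem a⟩, rfl⟩

end Coalgebra

section Convolution

open WithConv

theorem dualMul_apply (FA : FrobeniusAlgebra k A) (f g : Module.Dual k A) (a : A) :
    dualMul FA f g a = TensorProduct.lid k k (TensorProduct.map g f (FA.comul a)) := rfl

theorem dualMul_eq_ofConv_mul (FA : FrobeniusAlgebra k A) (f g : Module.Dual k A) :
    letI := FA.toCoalgebra
    dualMul FA f g = (toConv g * toConv f).ofConv := by
  have lid_eq_mul' : (TensorProduct.lid k k).toLinearMap = LinearMap.mul' k k :=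
    TensorProduct.ext' fun _ _ => rfl
  ext a
  exact LinearMap.congr_fun lid_eq_mul' _

theorem toConv_counit_eq_one (FA : FrobeniusAlgebra k A) :
    letI := FA.toCoalgebra
    toConv FA.counit = 1 := by
  let := FA.toCoalgebra
  rw [LinearMap.convOne_def, Algebra.linearMap_self, LinearMap.id_comp]
  rfl

theorem dualMul_assoc (FA : FrobeniusAlgebra k A) (f g h : Module.Dual k A) :
    dualMul FA (dualMul FA f g) h = dualMul FA f (dualMul FA g h) := by
  let := FA.toCoalgebra
  simp only [dualMul_eq_ofConv_mul, toConv_ofConv, mul_assoc]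

theorem counit_dualMul (FA : FrobeniusAlgebra k A) (f : Module.Dual k A) :
    dualMul FA FA.counit f = f := by
  let := FA.toCoalgebra
  rw [dualMul_eq_ofConv_mul, toConv_counit_eq_one, mul_one, ofConv_toConv]

theorem dualMul_counit (FA : FrobeniusAlgebra k A) (f : Module.Dual k A) :
    dualMul FA f FA.counit = f := by
  let := FA.toCoalgebra
  rw [dualMul_eq_ofConv_mul, toConv_counit_eq_one, one_mul, ofConv_toConv]

end Convolution

section Contraction

variable {R M N P : Type*} [CommSemiring R] [AddCommMonoid M] [Module R M] [AddCommMonoid N]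
  [Module R N] [AddCommMonoid P] [Module R P]

theorem lid_rTensor_eval (t : Module.Dual R M ⊗[R] N) (m : M) :
    TensorProduct.lid R N ((Module.Dual.eval R M m).rTensor N t) = dualTensorHom R M N t m := by
  induction t using TensorProduct.induction_on with
  | zero => simp
  | tmul f n => simp
  | add x y hx hy => simp [hx, hy]

theorem dualTensorHom_assoc_apply (t : (Module.Dual R M ⊗[R] N) ⊗[R] P) (m : M) :
    dualTensorHom R M (N ⊗[R] P) (TensorProduct.assoc R _ N P t) m
      = (LinearMap.applyₗ m ∘ₗ dualTensorHom R M N).rTensor P t := by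
  induction t using TensorProduct.induction_on with
  | zero => simp
  | tmul x p =>
    induction x using TensorProduct.induction_on with
    | zero => simp
    | tmul f n => simp [TensorProduct.smul_tmul']
    | add x y hx hy => simp [TensorProduct.add_tmul, hx, hy]
  | add x y hx hy => simp [hx, hy]

end Contraction

theorem dualPair_eq_dualTensorHom (t : Module.Dual k A ⊗[k] Module.Dual k A) (a b : A) :
    dualPair t a b = dualTensorHom k A (Module.Dual k A) t a b := by
  induction t using TensorProduct.induction_on with
  | zero => simp [dualPair]
  | tmul f g => simp [dualPair]
  | add x y hx hy => simp_all [dualPair]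

theorem dualPair_comm (t : Module.Dual k A ⊗[k] Module.Dual k A) (a b : A) :
    dualPair (TensorProduct.comm k _ _ t) a b = dualPair t b a := by
  induction t using TensorProduct.induction_on with
  | zero => simp [dualPair]
  | tmul f g => simp [dualPair, mul_comm]
  | add x y hx hy => simp_all [dualPair]

theorem dualPair_lTensor (φ : Module.Dual k A →ₗ[k] Module.Dual k A)
    (t : Module.Dual k A ⊗[k] Module.Dual k A) (a b : A) :
    dualPair (φ.lTensor _ t) a b = φ (dualTensorHom k A _ t a) b := by
  rw [dualPair_eq_dualTensorHom, ← LinearMap.comp_apply (dualTensorHom k A _),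
    dualTensorHom_comp_lTensor]
  rfl

theorem dualPair_rTensor (φ : Module.Dual k A →ₗ[k] Module.Dual k A)
    (t : Module.Dual k A ⊗[k] Module.Dual k A) (a b : A) :
    dualPair (φ.rTensor _ t) a b = φ (dualTensorHom k A _ (TensorProduct.comm k _ _ t) b) a := by
  rw [← dualPair_comm, ← LinearMap.lTensor_comm, dualPair_lTensor]

section DualCoalgebra

variable [Module.Finite k A]

theorem ext_dualPair {t t' : Module.Dual k A ⊗[k] Module.Dual k A}
    (h : ∀ a b, dualPair t a b = dualPair t' a b) : t = t' :=
  (dualTensorHom_bijective ..).injective <| LinearMap.ext₂ fun a b => by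
    simpa only [dualPair_eq_dualTensorHom] using h a b

noncomputable def dualComul :
    Module.Dual k A →ₗ[k] Module.Dual k A ⊗[k] Module.Dual k A :=
  (dualTensorHomEquiv k A (Module.Dual k A)).symm.toLinearMap ∘ₗ
    LinearMap.lcomp k (Module.Dual k A) (LinearMap.mul k A).flip ∘ₗ LinearMap.llcomp k A A k

theorem dualTensorHom_dualComul (f : Module.Dual k A) (a : A) :
    dualTensorHom k A _ (dualComul f) a = f ∘ₗ LinearMap.mulRight k a := by
  change dualTensorHomEquiv k A _ ((dualTensorHomEquiv k A _).symm _) a = _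
  rw [LinearEquiv.apply_symm_apply]
  rfl

theorem dualPair_dualComul (f : Module.Dual k A) (a b : A) :
    dualPair (dualComul f) a b = f (b * a) := by
  rw [dualPair_eq_dualTensorHom, dualTensorHom_dualComul]
  rfl

theorem dualTensorHom_comm_dualComul (f : Module.Dual k A) (b : A) :
    dualTensorHom k A _ (TensorProduct.comm k _ _ (dualComul f)) b
      = f ∘ₗ LinearMap.mulLeft k b := by
  ext a
  rw [← dualPair_eq_dualTensorHom, dualPair_comm, dualPair_dualComul]
  rfl

theorem dualComul_coassoc (f : Module.Dual k A) :
    TensorProduct.assoc k _ _ _ (TensorProduct.map dualComul LinearMap.id (dualComul f))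
      = TensorProduct.map LinearMap.id dualComul (dualComul f) := by
  refine (dualTensorHom_bijective ..).injective (LinearMap.ext fun a => ext_dualPair fun b c => ?_)
  rw [← LinearMap.rTensor_def, dualTensorHom_assoc_apply, ← LinearMap.rTensor_comp_apply,
    dualPair_rTensor, ← LinearMap.lTensor_def, ← LinearMap.comp_apply (dualTensorHom k A _),
    dualTensorHom_comp_lTensor]
  simp [dualTensorHom_comm_dualComul, dualTensorHom_dualComul, dualPair_dualComul, mul_assoc]

theorem lid_map_dualCounit_dualComul (f : Module.Dual k A) :
    TensorProduct.lid k _ (TensorProduct.map dualCounit LinearMap.id (dualComul f)) = f := by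
  rw [dualCounit, ← LinearMap.rTensor_def, lid_rTensor_eval, dualTensorHom_dualComul]
  ext a
  simp

theorem rid_map_dualCounit_dualComul (f : Module.Dual k A) :
    TensorProduct.rid k _ (TensorProduct.map LinearMap.id dualCounit (dualComul f)) = f := by
  rw [← TensorProduct.comm_trans_lid, LinearEquiv.trans_apply, ← LinearMap.lTensor_def,
    ← LinearMap.rTensor_comm, dualCounit, lid_rTensor_eval, dualTensorHom_comm_dualComul]
  ext a
  simp

theorem dualComul_dualMul_left (FA : FrobeniusAlgebra k A) (f g : Module.Dual k A) :
    dualComul (dualMul FA f g)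
      = TensorProduct.map (dualMul FA f) LinearMap.id (dualComul g) := by
  refine ext_dualPair fun a b => ?_
  rw [← LinearMap.rTensor_def, dualPair_rTensor, dualTensorHom_comm_dualComul,
    dualPair_dualComul, dualMul_apply, dualMul_apply, FA.frob_left,
    ← LinearMap.comp_apply (TensorProduct.map g f), ← TensorProduct.map_comp, LinearMap.comp_id]

theorem dualComul_dualMul_right (FA : FrobeniusAlgebra k A) (f g : Module.Dual k A) :
    dualComul (dualMul FA f g)
      = TensorProduct.map LinearMap.id ((dualMul FA).flip g) (dualComul f) := by
  refine ext_dualPair fun a b => ?_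
  rw [← LinearMap.lTensor_def, dualPair_lTensor, dualTensorHom_dualComul,
    dualPair_dualComul, LinearMap.flip_apply, dualMul_apply, dualMul_apply, FA.frob_right,
    ← LinearMap.comp_apply (TensorProduct.map g f), ← TensorProduct.map_comp, LinearMap.comp_id]

end DualCoalgebra

/-- The dual space `A*` of a Frobenius algebra `A` is again a Frobenius algebra, with
multiplication `(f·g)(a) = f(a^{(2)})g(a^{(1)})`, unit `ν_A`, comultiplication determined
by `Δ(f)(a ⊗ b) = f(ba)`, and counit `f ↦ f(1)`: these data satisfy associativity,
unitality, coassociativity, counitality, and the Frobenius conditions. -/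
theorem dual_frobenius (FA : FrobeniusAlgebra k A) :
    ∃ Δs : Module.Dual k A →ₗ[k] Module.Dual k A ⊗[k] Module.Dual k A,
      (∀ (f : Module.Dual k A) (a b : A), dualPair (Δs f) a b = f (b * a)) ∧
      (∀ f g h : Module.Dual k A,
          dualMul FA (dualMul FA f g) h = dualMul FA f (dualMul FA g h)) ∧
      (∀ f : Module.Dual k A, dualMul FA FA.counit f = f) ∧
      (∀ f : Module.Dual k A, dualMul FA f FA.counit = f) ∧
      (∀ f : Module.Dual k A,
        TensorProduct.assoc k (Module.Dual k A) (Module.Dual k A) (Module.Dual k A)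
            (TensorProduct.map Δs (LinearMap.id : Module.Dual k A →ₗ[k] Module.Dual k A)
              (Δs f))
          = TensorProduct.map (LinearMap.id : Module.Dual k A →ₗ[k] Module.Dual k A) Δs
              (Δs f)) ∧
      (∀ f : Module.Dual k A,
        TensorProduct.lid k (Module.Dual k A)
          (TensorProduct.map dualCounit
            (LinearMap.id : Module.Dual k A →ₗ[k] Module.Dual k A) (Δs f)) = f) ∧
      (∀ f : Module.Dual k A,
        TensorProduct.rid k (Module.Dual k A)
          (TensorProduct.map (LinearMap.id : Module.Dual k A →ₗ[k] Module.Dual k A)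
            dualCounit (Δs f)) = f) ∧
      (∀ f g : Module.Dual k A,
        Δs (dualMul FA f g)
          = TensorProduct.map (dualMul FA f)
              (LinearMap.id : Module.Dual k A →ₗ[k] Module.Dual k A) (Δs g)) ∧
      (∀ f g : Module.Dual k A,
        Δs (dualMul FA f g)
          = TensorProduct.map (LinearMap.id : Module.Dual k A →ₗ[k] Module.Dual k A)
              ((dualMul FA).flip g) (Δs f)) := by
  have := FA.finite
  exact ⟨dualComul, dualPair_dualComul, dualMul_assoc FA, counit_dualMul FA, dualMul_counit FA,
    dualComul_coassoc, lid_map_dualCounit_dualComul, rid_map_dualCounit_dualComul,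
    dualComul_dualMul_left FA, dualComul_dualMul_right FA⟩

end DualFrobenius
end
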